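/- arXiv:1209.0951 — 7 statements merged into one kernel-verified Lean document; each statement's English description precedes it below -/
import Mathlib

section
/- Let G be a finite simple graph with vertex set V and edge set E, let J : E → ℝ be coupling constants and β ∈ ℝ. Then the Ising partition function satisfies the high-temperature expansion: Σ_{σ : V → {−1,1}} exp(β Σ_{{u,v} ∈ E} J_{{u,v}} σ(u) σ(v)) = (∏_{e ∈ E} cosh(β J_e)) · 2^{|V|} · Σ_{S ⊆ E even} ∏_{e ∈ S} tanh(β J_e). -/
/-- The spin product `σ(u)·σ(v)` (as a real number) associated to an unordered edge. -/
noncomputable def spinProd {V : Type*} (σ : V → ℤˣ) : Sym2 V → ℝ :=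
  Sym2.lift ⟨fun u v => ((σ u : ℤ) : ℝ) * ((σ v : ℤ) : ℝ), fun u v => by ring⟩

/-- A subset `S` of the edges is even if every vertex is incident to an even
number of edges of `S`. -/
def IsEvenSubgraph {V : Type*} [Fintype V] [DecidableEq V] (S : Finset (Sym2 V)) : Prop :=
  ∀ v : V, Even ((S.filter (fun e => v ∈ e)).card)

instance {V : Type*} [Fintype V] [DecidableEq V] : DecidablePred (IsEvenSubgraph (V := V)) :=
  fun _ => Fintype.decidableForallFintype

lemma spinProd_pm {V : Type*} (σ : V → ℤˣ) (e : Sym2 V) :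
    spinProd σ e = 1 ∨ spinProd σ e = -1 := by
  induction e using Sym2.ind with
  | _ u v =>
    simp only [spinProd, Sym2.lift_mk]
    rcases Int.units_eq_one_or (σ u) with h | h <;>
      rcases Int.units_eq_one_or (σ v) with h' | h' <;> simp [h, h']

lemma exp_mul_pm (x s : ℝ) (hs : s = 1 ∨ s = -1) :
    Real.exp (x * s) = Real.cosh x * (1 + Real.tanh x * s) := by
  have h0 : Real.cosh x ≠ 0 := (Real.cosh_pos x).ne'
  rcases hs with h | h <;> subst h
  · rw [mul_one, mul_one, mul_add, mul_one, Real.tanh_eq_sinh_div_cosh,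
      mul_div_cancel₀ _ h0, Real.cosh_add_sinh]
  · rw [mul_neg_one, mul_neg_one, mul_add, mul_one, Real.tanh_eq_sinh_div_cosh,
      ← neg_div, mul_div_cancel₀ _ h0, ← sub_eq_add_neg, Real.cosh_sub_sinh]

lemma prod_spinProd {V : Type*} [Fintype V] [DecidableEq V] (σ : V → ℤˣ)
    (S : Finset (Sym2 V)) (hS : ∀ e ∈ S, ¬ e.IsDiag) :
    ∏ e ∈ S, spinProd σ e =
      ∏ v : V, ((σ v : ℤ) : ℝ) ^ ((S.filter (fun e => v ∈ e)).card) := by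
  have step1 : ∀ e ∈ S, spinProd σ e =
      ∏ v ∈ Finset.univ.filter (fun v => v ∈ e), ((σ v : ℤ) : ℝ) := by
    intro e he
    induction e using Sym2.ind with
    | _ u v =>
      have hne : u ≠ v := by
        intro h; exact hS _ he (by simp [h, Sym2.isDiag_iff_proj_eq])
      have hset : Finset.univ.filter (fun w => w ∈ s(u, v)) = {u, v} := by
        ext w; simp [Sym2.mem_iff]
      rw [hset, Finset.prod_pair hne]
      simp [spinProd]
  rw [Finset.prod_congr rfl step1]
  rw [Finset.prod_comm' (t' := Finset.univ)
      (s' := fun v => S.filter (fun e => v ∈ e))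
      (fun e v => by simp [and_comm])]
  exact Finset.prod_congr rfl fun v _ => Finset.prod_const _

lemma sum_units_pow (d : ℕ) :
    ∑ s : ℤˣ, ((s : ℤ) : ℝ) ^ d = if Even d then 2 else 0 := by
  have huniv : (Finset.univ : Finset ℤˣ) = {1, -1} := by
    ext s
    simp [Int.units_eq_one_or s]
  rw [huniv, Finset.sum_insert (by decide), Finset.sum_singleton]
  push_cast
  rcases Nat.even_or_odd d with h | h
  · rw [if_pos h, one_pow, h.neg_one_pow]; norm_num
  · rw [if_neg (Nat.not_even_iff_odd.mpr h), one_pow, h.neg_one_pow]; norm_num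

lemma sum_prod_spinProd {V : Type*} [Fintype V] [DecidableEq V]
    (S : Finset (Sym2 V)) (hS : ∀ e ∈ S, ¬ e.IsDiag) :
    ∑ σ : V → ℤˣ, ∏ e ∈ S, spinProd σ e =
      if IsEvenSubgraph S then (2 : ℝ) ^ (Fintype.card V) else 0 := by
  have h1 : ∑ σ : V → ℤˣ, ∏ e ∈ S, spinProd σ e =
      ∏ v : V, ∑ s : ℤˣ, ((s : ℤ) : ℝ) ^ ((S.filter (fun e => v ∈ e)).card) := by
    rw [Fintype.prod_sum (fun v (s : ℤˣ) =>
        ((s : ℤ) : ℝ) ^ ((S.filter (fun e => v ∈ e)).card))]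
    exact Finset.sum_congr rfl fun σ _ => prod_spinProd σ S hS
  rw [h1]
  simp only [sum_units_pow]
  by_cases h : IsEvenSubgraph S
  · rw [if_pos h]
    rw [Finset.prod_congr rfl (fun v _ => if_pos (h v)), Finset.prod_const,
      Finset.card_univ]
  · rw [if_neg h]
    obtain ⟨v, hv⟩ := not_forall.mp h
    exact Finset.prod_eq_zero (Finset.mem_univ v) (if_neg hv)

/-- High-temperature expansion of the Ising partition function. -/
theorem high_temperature_expansion {V : Type*} [Fintype V] [DecidableEq V]
    (G : SimpleGraph V) [DecidableRel G.Adj] (J : Sym2 V → ℝ) (β : ℝ) :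
    ∑ σ : V → ℤˣ, Real.exp (β * ∑ e ∈ G.edgeFinset, J e * spinProd σ e) =
      (∏ e ∈ G.edgeFinset, Real.cosh (β * J e)) * 2 ^ (Fintype.card V) *
        ∑ S ∈ G.edgeFinset.powerset.filter (fun S => IsEvenSubgraph S),
          ∏ e ∈ S, Real.tanh (β * J e) := by
  have hdiag : ∀ e ∈ G.edgeFinset, ¬ e.IsDiag := fun e he =>
    G.not_isDiag_of_mem_edgeSet (SimpleGraph.mem_edgeFinset.mp he)
  calc
    ∑ σ : V → ℤˣ, Real.exp (β * ∑ e ∈ G.edgeFinset, J e * spinProd σ e)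
        = ∑ σ : V → ℤˣ, ∏ e ∈ G.edgeFinset,
            (Real.cosh (β * J e) * (1 + Real.tanh (β * J e) * spinProd σ e)) := by
        refine Finset.sum_congr rfl fun σ _ => ?_
        rw [Finset.mul_sum, Real.exp_sum]
        refine Finset.prod_congr rfl fun e _ => ?_
        rw [show β * (J e * spinProd σ e) = (β * J e) * spinProd σ e by ring]
        exact exp_mul_pm _ _ (spinProd_pm σ e)
    _ = (∏ e ∈ G.edgeFinset, Real.cosh (β * J e)) *
          ∑ σ : V → ℤˣ, ∏ e ∈ G.edgeFinset,
            (1 + Real.tanh (β * J e) * spinProd σ e) := by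
        rw [Finset.mul_sum]
        exact Finset.sum_congr rfl fun σ _ => Finset.prod_mul_distrib
    _ = (∏ e ∈ G.edgeFinset, Real.cosh (β * J e)) *
          ∑ S ∈ G.edgeFinset.powerset,
            (∏ e ∈ S, Real.tanh (β * J e)) *
              (∑ σ : V → ℤˣ, ∏ e ∈ S, spinProd σ e) := by
        congr 1
        have : ∀ σ : V → ℤˣ, ∏ e ∈ G.edgeFinset,
            (1 + Real.tanh (β * J e) * spinProd σ e) =
            ∑ S ∈ G.edgeFinset.powerset,
              (∏ e ∈ S, Real.tanh (β * J e)) * ∏ e ∈ S, spinProd σ e := by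
          intro σ
          have := Finset.prod_add (fun e => Real.tanh (β * J e) * spinProd σ e)
            (fun _ => (1 : ℝ)) G.edgeFinset
          simp only [Finset.prod_const_one, mul_one, add_comm] at this ⊢
          rw [this]
          exact Finset.sum_congr rfl fun S _ => Finset.prod_mul_distrib
        rw [Finset.sum_congr rfl fun σ _ => this σ, Finset.sum_comm]
        exact Finset.sum_congr rfl fun S _ => (Finset.mul_sum _ _ _).symm
    _ = (∏ e ∈ G.edgeFinset, Real.cosh (β * J e)) *
          ∑ S ∈ G.edgeFinset.powerset,
            (∏ e ∈ S, Real.tanh (β * J e)) *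
              (if IsEvenSubgraph S then (2 : ℝ) ^ (Fintype.card V) else 0) := by
        congr 1
        refine Finset.sum_congr rfl fun S hS => ?_
        rw [sum_prod_spinProd S fun e he =>
          hdiag e (Finset.mem_powerset.mp hS he)]
    _ = (∏ e ∈ G.edgeFinset, Real.cosh (β * J e)) * 2 ^ (Fintype.card V) *
          ∑ S ∈ G.edgeFinset.powerset.filter (fun S => IsEvenSubgraph S),
            ∏ e ∈ S, Real.tanh (β * J e) := by
        rw [Finset.sum_filter, Finset.mul_sum, Finset.mul_sum]
        refine Finset.sum_congr rfl fun S _ => ?_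
        by_cases h : IsEvenSubgraph S
        · rw [if_pos h, if_pos h]; ring
        · rw [if_neg h, if_neg h]; ring
end

section
/- For J₁, J₂, J₃, J₄ ∈ (0, ∞), there exists a unique β ∈ (0, ∞) such that, setting x_i = tanh(β·J_i) for i = 1,2,3,4, one has 1 + x₃x₄ = x₃ + x₄ + x₁x₂ + x₁x₂x₃ + x₂x₃x₄ + x₁x₂x₃x₄. -/
lemma my_tanh_lt_one (x : ℝ) : Real.tanh x < 1 := by
  rw [Real.tanh_eq_sinh_div_cosh, div_lt_one (Real.cosh_pos x)]
  nlinarith [Real.cosh_sub_sinh x, Real.exp_pos (-x)]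

lemma my_tanh_nonneg {x : ℝ} (hx : 0 ≤ x) : 0 ≤ Real.tanh x := by
  rw [Real.tanh_eq_sinh_div_cosh]
  exact div_nonneg (by rw [← Real.sinh_zero]; exact Real.sinh_le_sinh.2 hx)
    (Real.cosh_pos x).le

lemma my_tanh_strictMono : StrictMono Real.tanh := by
  intro a b hab
  rw [Real.tanh_eq_sinh_div_cosh, Real.tanh_eq_sinh_div_cosh,
    div_lt_div_iff₀ (Real.cosh_pos a) (Real.cosh_pos b)]
  nlinarith [Real.sinh_sub a b, Real.sinh_neg_iff.2 (show a - b < 0 by linarith)]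

lemma my_continuous_tanh : Continuous Real.tanh := by
  have : Real.tanh = fun x => Real.sinh x / Real.cosh x := by
    funext x; exact Real.tanh_eq_sinh_div_cosh x
  rw [this]
  exact Real.continuous_sinh.div Real.continuous_cosh (fun x => (Real.cosh_pos x).ne')

lemma my_tanh_one_gt_half : (1:ℝ)/2 < Real.tanh 1 := by
  rw [Real.tanh_eq_sinh_div_cosh, lt_div_iff₀ (Real.cosh_pos 1)]
  rw [Real.sinh_eq, Real.cosh_eq]
  have h1 : Real.exp 1 > 2.7182818283 := Real.exp_one_gt_d9
  have h2 : Real.exp (-1) = (Real.exp 1)⁻¹ := Real.exp_neg 1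
  have h3 : (0:ℝ) < Real.exp 1 := Real.exp_pos 1
  rw [h2]
  have h4 : (Real.exp 1)⁻¹ * Real.exp 1 = 1 := inv_mul_cancel₀ h3.ne'
  have h5 : (0:ℝ) < (Real.exp 1)⁻¹ := inv_pos.2 h3
  nlinarith [mul_pos h3 h3, mul_pos h5 h3]

lemma my_prod_lt {a b c d : ℝ} (ha : 0 ≤ a) (hab : a < b) (hc : 0 ≤ c)
    (hcd : c < d) : a * c < b * d := by nlinarith

/-- For positive coupling constants `J₁, J₂, J₃, J₄` there is a unique
`β ∈ (0,∞)` solving the critical equation of the `2×1` square-lattice Ising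
model, where `xᵢ = tanh(β·Jᵢ)`. -/
theorem two_by_one_square_lattice_critical_temperature
    (J1 J2 J3 J4 : ℝ) (h1 : 0 < J1) (h2 : 0 < J2) (h3 : 0 < J3) (h4 : 0 < J4) :
    ∃! β : ℝ, 0 < β ∧
      1 + Real.tanh (β * J3) * Real.tanh (β * J4) =
        Real.tanh (β * J3) + Real.tanh (β * J4) +
          Real.tanh (β * J1) * Real.tanh (β * J2) +
          Real.tanh (β * J1) * Real.tanh (β * J2) * Real.tanh (β * J3) +
          Real.tanh (β * J2) * Real.tanh (β * J3) * Real.tanh (β * J4) +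
          Real.tanh (β * J1) * Real.tanh (β * J2) * Real.tanh (β * J3) *
            Real.tanh (β * J4) := by
  set f : ℝ → ℝ := fun β =>
    Real.tanh (β * J3) + Real.tanh (β * J4) +
      Real.tanh (β * J1) * Real.tanh (β * J2) +
      Real.tanh (β * J1) * Real.tanh (β * J2) * Real.tanh (β * J3) +
      Real.tanh (β * J2) * Real.tanh (β * J3) * Real.tanh (β * J4) +
      Real.tanh (β * J1) * Real.tanh (β * J2) * Real.tanh (β * J3) *
        Real.tanh (β * J4) -
      (1 + Real.tanh (β * J3) * Real.tanh (β * J4)) with hf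
  -- strict monotonicity of f on [0, ∞)
  have hmono : StrictMonoOn f (Set.Ici 0) := by
    intro a ha b _ hab
    have key : ∀ J : ℝ, 0 < J →
        0 ≤ Real.tanh (a * J) ∧ Real.tanh (a * J) < Real.tanh (b * J) ∧
          Real.tanh (b * J) < 1 := by
      intro J hJ
      exact ⟨my_tanh_nonneg (mul_nonneg ha hJ.le),
        my_tanh_strictMono (by nlinarith [Set.mem_Ici.mp ha]), my_tanh_lt_one _⟩
    obtain ⟨u1n, u1v, v1o⟩ := key J1 h1
    obtain ⟨u2n, u2v, v2o⟩ := key J2 h2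
    obtain ⟨u3n, u3v, v3o⟩ := key J3 h3
    obtain ⟨u4n, u4v, v4o⟩ := key J4 h4
    set u1 := Real.tanh (a * J1); set u2 := Real.tanh (a * J2)
    set u3 := Real.tanh (a * J3); set u4 := Real.tanh (a * J4)
    set v1 := Real.tanh (b * J1); set v2 := Real.tanh (b * J2)
    set v3 := Real.tanh (b * J3); set v4 := Real.tanh (b * J4)
    have A : u1 * u2 < v1 * v2 := my_prod_lt u1n u1v u2n u2v
    have B : u1 * u2 * u3 < v1 * v2 * v3 :=
      my_prod_lt (mul_nonneg u1n u2n) A u3n u3v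
    have C : u2 * u3 * u4 < v2 * v3 * v4 :=
      my_prod_lt (mul_nonneg u2n u3n) (my_prod_lt u2n u2v u3n u3v) u4n u4v
    have D : u1 * u2 * u3 * u4 < v1 * v2 * v3 * v4 :=
      my_prod_lt (mul_nonneg (mul_nonneg u1n u2n) u3n) B u4n u4v
    have E : (1 - v3) * (1 - v4) < (1 - u3) * (1 - u4) :=
      my_prod_lt (by linarith) (by linarith) (by linarith) (by linarith)
    simp only [hf]
    nlinarith [E]
  -- existence of a point where f is positive
  set m := min J1 (min J2 (min J3 J4)) with hm
  have hmpos : 0 < m := by positivity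
  set B : ℝ := m⁻¹ with hB
  have hBpos : 0 < B := by positivity
  have hbig : ∀ J : ℝ, 0 < J → m ≤ J → (1:ℝ)/2 < Real.tanh (B * J) ∧
      Real.tanh (B * J) < 1 := by
    intro J hJ hmJ
    refine ⟨lt_of_lt_of_le my_tanh_one_gt_half ?_, my_tanh_lt_one _⟩
    apply my_tanh_strictMono.monotone
    rw [hB, ← div_eq_inv_mul, le_div_iff₀ hmpos]
    linarith
  obtain ⟨p1, q1⟩ := hbig J1 h1 (min_le_left _ _)
  obtain ⟨p2, q2⟩ := hbig J2 h2 ((min_le_right _ _).trans (min_le_left _ _))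
  obtain ⟨p3, q3⟩ := hbig J3 h3
    ((min_le_right _ _).trans ((min_le_right _ _).trans (min_le_left _ _)))
  obtain ⟨p4, q4⟩ := hbig J4 h4
    ((min_le_right _ _).trans ((min_le_right _ _).trans (min_le_right _ _)))
  have hfB : 0 < f B := by
    set x1 := Real.tanh (B * J1); set x2 := Real.tanh (B * J2)
    set x3 := Real.tanh (B * J3); set x4 := Real.tanh (B * J4)
    have r1 : (1:ℝ)/4 < x1 * x2 := by nlinarith
    have r2 : 1 - x3 - x4 + x3 * x4 < 1/4 := by nlinarith
    have r3 : 0 ≤ x1 * x2 * x3 := by positivity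
    have r4 : 0 ≤ x2 * x3 * x4 := by positivity
    have r5 : 0 ≤ x1 * x2 * x3 * x4 := by positivity
    simp only [hf]
    linarith
  have hf0 : f 0 = -1 := by simp [hf]
  -- intermediate value theorem
  have ct : ∀ J : ℝ, Continuous fun β : ℝ => Real.tanh (β * J) := fun J =>
    my_continuous_tanh.comp (continuous_id.mul continuous_const)
  have hcont : ContinuousOn f (Set.Icc 0 B) := by
    apply Continuous.continuousOn
    exact ((((((ct J3).add (ct J4)).add ((ct J1).mul (ct J2))).add
      (((ct J1).mul (ct J2)).mul (ct J3))).add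
      (((ct J2).mul (ct J3)).mul (ct J4))).add
      ((((ct J1).mul (ct J2)).mul (ct J3)).mul (ct J4))).sub
      (continuous_const.add ((ct J3).mul (ct J4)))
  have hiv := intermediate_value_Ioo (le_of_lt hBpos) hcont
  have h0mem : (0:ℝ) ∈ Set.Ioo (f 0) (f B) := ⟨by rw [hf0]; norm_num, hfB⟩
  obtain ⟨β, hβmem, hβ⟩ := hiv h0mem
  refine ⟨β, ⟨hβmem.1, ?_⟩, ?_⟩
  · have : f β = 0 := hβ
    simp only [hf] at this
    linarith
  · rintro γ ⟨hγpos, hγeq⟩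
    have hfγ : f γ = 0 := by simp only [hf]; linarith
    have hfβ : f β = 0 := hβ
    exact hmono.injOn (le_of_lt hγpos) (le_of_lt hβmem.1) (by rw [hfγ, hfβ])
end

section
/- Let X be a finite type, σ a permutation of X, and d : X → ℂ. Let P_σ denote the permutation matrix of σ and D the diagonal matrix with entries d. Then det(1 − P_σ · D) = ∏_{O} (1 − ∏_{i ∈ O} d(i)), where the outer product ranges over all orbits O of σ on X (including fixed points). -/
/-!
The matrix `1 - P_σ D` has no entries linking different orbits of `σ`, so its determinant is the
product of the determinants of its diagonal blocks, one block per orbit. On a single orbit of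
size `n` the permutation is an `n`-cycle (or the identity of a point), and in the Leibniz
expansion only the identity and `σ⁻¹` survive: they contribute `1` and
`sign σ · (-1)ⁿ · ∏ d = -∏ d`.
-/

open Finset Matrix

theorem Matrix.det_eq_prod_det_toSquareBlock {m α R : Type*} [Fintype m] [DecidableEq m]
    [DecidableEq α] [CommRing R] {M : Matrix m m R} {b : m → α}
    (hM : ∀ i j, b i ≠ b j → M i j = 0) :
    M.det = ∏ a ∈ univ.image b, (M.toSquareBlock b a).det := by
  classical
  -- any linear order on the block labels makes `M` block triangular
  let _ : LinearOrder α := linearOrderOfSTO WellOrderingRel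
  convert BlockTriangular.det fun i j hij => hM i j hij.ne'

namespace Equiv.Perm

variable {Y R : Type*} [CommRing R]

theorem apply_ne_self_of_forall_sameCycle {π : Perm Y} (hπ : ∀ x y, π.SameCycle x y)
    (hπ1 : π ≠ 1) (y : Y) : π y ≠ y := fun hy =>
  hπ1 (Perm.ext fun z => ((hπ y z).apply_eq_self_iff).1 hy)

theorem eq_one_or_eq_of_forall_apply_eq_self_or_eq [Finite Y] {π τ : Perm Y}
    (hπ : ∀ x y, π.SameCycle x y) (hτ : ∀ i, τ i = i ∨ τ i = π i) : τ = 1 ∨ τ = π := by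
  refine or_iff_not_imp_left.2 fun hτ1 => ?_
  obtain ⟨x, hx⟩ : ∃ x, τ x ≠ x := by
    by_contra! h
    exact hτ1 (Perm.ext h)
  have hτx : τ x = π x := (hτ x).resolve_left hx
  have hfree := apply_ne_self_of_forall_sameCycle hπ fun h => hx (by rw [hτx, h, one_apply])
  -- if `τ y = π y` but `τ (π y) = π y`, injectivity of `τ` would make `y` a fixed point of `π`
  have hpow : ∀ n : ℕ, τ ((π ^ n) x) = π ((π ^ n) x) := by
    intro n
    induction n with
    | zero => exact hτx
    | succ n ih =>
      rw [pow_succ', mul_apply]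
      refine (hτ _).resolve_left fun h => hfree ((π ^ n) x) (τ.injective ?_)
      rw [h, ih]
  ext z
  obtain ⟨n, rfl⟩ := (hπ x z).exists_nat_pow_eq
  exact hpow n

variable [Fintype Y] [DecidableEq Y]

theorem one_sub_permMatrix_mul_diagonal_apply (π : Perm Y) (d : Y → R) (i j : Y) :
    (1 - π.permMatrix R * diagonal d) i j =
      (if i = j then 1 else 0) - if π i = j then d j else 0 := by
  rw [Matrix.sub_apply, Matrix.one_apply]
  simp [PEquiv.toMatrix_apply]

theorem det_one_sub_permMatrix_mul_diagonal_of_forall_sameCycle [Nonempty Y] {π : Perm Y}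
    (hπ : ∀ x y, π.SameCycle x y) (d : Y → R) :
    det (1 - π.permMatrix R * diagonal d) = 1 - ∏ i, d i := by
  obtain ⟨x⟩ := ‹Nonempty Y›
  by_cases hπ1 : π = 1
  · subst hπ1
    have : Subsingleton Y := ⟨fun y z => sameCycle_one.1 (hπ y z)⟩
    rw [permMatrix_one, one_mul, ← diagonal_one, diagonal_sub, det_diagonal,
      Fintype.prod_subsingleton _ x, Fintype.prod_subsingleton _ x]
  have hfree := apply_ne_self_of_forall_sameCycle hπ hπ1
  have hfree_inv : ∀ y, π⁻¹ y ≠ y := fun y h => hfree y (by simpa using congrArg π h.symm)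
  have hsign : sign π = -(-1) ^ Fintype.card Y := by
    have hsupp : π.support = univ := eq_univ_of_forall fun y => mem_support.2 (hfree y)
    rw [IsCycle.sign ⟨x, hfree x, fun y _ => hπ x y⟩, hsupp, card_univ]
  have hterm_one : ∏ i, (1 - π.permMatrix R * diagonal d) ((1 : Perm Y) i) i = 1 :=
    prod_eq_one fun i _ => by
      rw [one_sub_permMatrix_mul_diagonal_apply, one_apply, if_pos rfl, if_neg (hfree i), sub_zero]
  have hterm_inv : ∏ i, (1 - π.permMatrix R * diagonal d) (π⁻¹ i) i =
      (-1) ^ Fintype.card Y * ∏ i, d i := by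
    rw [← card_univ, ← prod_neg]
    refine prod_congr rfl fun i _ => ?_
    rw [one_sub_permMatrix_mul_diagonal_apply, if_neg (hfree_inv i),
      if_pos (show π (π⁻¹ i) = i from π.apply_symm_apply i), zero_sub]
  rw [det_apply, sum_eq_add_of_mem 1 π⁻¹ (mem_univ _) (mem_univ _) (Ne.symm (inv_ne_one.2 hπ1))]
  · rw [hterm_one, hterm_inv, sign_inv, hsign, sign_one, one_smul]
    simp [Units.smul_def, ← mul_assoc, ← mul_pow, sub_eq_add_neg]
  · intro τ _ hτ
    obtain ⟨i, hi1, hi2⟩ : ∃ i, τ i ≠ i ∧ τ i ≠ π⁻¹ i := by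
      by_contra! h
      have := eq_one_or_eq_of_forall_apply_eq_self_or_eq (fun x y => sameCycle_inv.2 (hπ x y))
        fun i => or_iff_not_imp_left.2 (h i)
      tauto
    rw [prod_eq_zero (mem_univ i), smul_zero]
    rw [one_sub_permMatrix_mul_diagonal_apply, if_neg hi1,
      if_neg fun h => hi2 (eq_inv_iff_eq.2 h), sub_zero]

theorem filter_sameCycle_eq_filter_sameCycle_iff {σ : Perm Y} {i j : Y} :
    univ.filter (σ.SameCycle i) = univ.filter (σ.SameCycle j) ↔ σ.SameCycle i j := by
  refine ⟨fun h => ?_, fun h => ?_⟩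
  · have hj : j ∈ univ.filter (σ.SameCycle j) := mem_filter.2 ⟨mem_univ j, .refl σ j⟩
    exact (mem_filter.1 (h ▸ hj)).2
  · ext k
    simp only [mem_filter, mem_univ, true_and]
    exact ⟨h.symm.trans, h.trans⟩

theorem toSquareBlock_one_sub_permMatrix_mul_diagonal {α : Type*} [DecidableEq α] {σ : Perm Y}
    {b : Y → α} (hb : ∀ i, b (σ i) = b i) (d : Y → R) (a : α) :
    (1 - σ.permMatrix R * diagonal d).toSquareBlock b a =
      1 - (σ.subtypePerm (p := fun i => b i = a) fun i => by rw [hb]).permMatrix R *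
        diagonal fun i : {i // b i = a} => d i := by
  ext i j
  rw [toSquareBlock_def, of_apply, one_sub_permMatrix_mul_diagonal_apply,
    one_sub_permMatrix_mul_diagonal_apply]
  simp [Subtype.ext_iff]

end Equiv.Perm

open Equiv.Perm in
/-- For a permutation `σ` of a finite type `X` and a diagonal matrix `D` with
entries `d`, `det(1 - P_σ·D)` equals the product over the orbits `O` of `σ`
of `1 - ∏_{i ∈ O} d(i)`. -/
theorem det_one_sub_permMatrix_mul_diagonal {X : Type*} [Fintype X] [DecidableEq X]
    (σ : Equiv.Perm X) (d : X → ℂ) :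
    Matrix.det ((1 : Matrix X X ℂ) - σ.permMatrix ℂ * Matrix.diagonal d) =
      ∏ O ∈ Finset.univ.image (fun i => Finset.univ.filter (fun j => σ.SameCycle i j)),
        (1 - ∏ i ∈ O, d i) := by
  have hblock : ∀ i j, univ.filter (σ.SameCycle i) ≠ univ.filter (σ.SameCycle j) →
      (1 - σ.permMatrix ℂ * diagonal d) i j = 0 := by
    intro i j hij
    rw [Ne, filter_sameCycle_eq_filter_sameCycle_iff] at hij
    rw [one_sub_permMatrix_mul_diagonal_apply, if_neg fun h : i = j => hij (h ▸ .refl σ i),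
      if_neg fun h : σ i = j => hij (h ▸ sameCycle_apply_right.2 (.refl σ i)), sub_zero]
  rw [det_eq_prod_det_toSquareBlock hblock]
  refine prod_congr rfl fun O hO => ?_
  obtain ⟨x, -, rfl⟩ := mem_image.1 hO
  have hmem : ∀ y, y ∈ univ.filter (σ.SameCycle x) ↔
      univ.filter (σ.SameCycle y) = univ.filter (σ.SameCycle x) := fun y => by
    rw [filter_sameCycle_eq_filter_sameCycle_iff, mem_filter, sameCycle_comm]
    exact and_iff_right (mem_univ y)
  have : Nonempty {y // univ.filter (σ.SameCycle y) = univ.filter (σ.SameCycle x)} := ⟨⟨x, rfl⟩⟩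
  rw [toSquareBlock_one_sub_permMatrix_mul_diagonal
      (fun i => filter_sameCycle_eq_filter_sameCycle_iff.2 (sameCycle_apply_left.2 (.refl σ i))),
    det_one_sub_permMatrix_mul_diagonal_of_forall_sameCycle, prod_subtype _ hmem]
  intro y z
  exact sameCycle_subtypePerm.2 (filter_sameCycle_eq_filter_sameCycle_iff.1 (y.2.trans z.2.symm))
end

section
/- Let n ≥ 1, let β : Fin n → ℝ satisfy β_j ∈ (0, 2π) for all j and Σ_j β_j = 2π, let σ be the cyclic permutation j ↦ j+1 of Fin n, let P_σ be its permutation matrix and Q the diagonal matrix with entries exp(i·β_j/2). Then det(1 − P_σ · Q) = 2. -/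
/-!
Write `M = 1 - P_σ Q`. In the Leibniz expansion of `det M` a permutation `τ` contributes only if
every `τ i` is `i` or `σ⁻¹ i`; when `σ` is a single cycle through all indices this forces
`τ = 1` or `τ = σ⁻¹`, so `det M = 1 - ∏ q_j`. For the phases `q_j = exp(i β_j / 2)` the product
is `exp(i π) = -1`.
-/

open Finset Equiv

theorem Equiv.Perm.IsCycle.eq_one_or_eq_of_forall_apply_eq_or_eq {ι : Type*} [Fintype ι]
    [DecidableEq ι] {ρ τ : Perm ι} (hρ : ρ.IsCycle) (hsupp : ρ.support = univ)
    (h : ∀ i, τ i = i ∨ τ i = ρ i) : τ = 1 ∨ τ = ρ := by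
  have hmoved (i : ι) : ρ i ≠ i := Perm.mem_support.mp (hsupp ▸ mem_univ i)
  refine or_iff_not_imp_left.mpr fun hτ => ?_
  obtain ⟨x, hx⟩ : ∃ x, τ x ≠ x := by
    by_contra! hfix
    exact hτ (Perm.ext hfix)
  -- `τ` cannot fix `ρ i` once `τ i = ρ i`, by injectivity
  have step (i : ι) (hi : τ i = ρ i) : τ (ρ i) = ρ (ρ i) :=
    (h (ρ i)).resolve_left fun hfix => hmoved i (τ.injective (hfix.trans hi.symm))
  have orbit (k : ℕ) : τ ((ρ ^ k) x) = ρ ((ρ ^ k) x) := by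
    induction k with
    | zero => exact (h x).resolve_left hx
    | succ k ih => rw [pow_succ', Perm.mul_apply]; exact step _ ih
  ext y
  obtain ⟨k, rfl⟩ := hρ.exists_pow_eq (hmoved x) (hmoved y)
  exact orbit k

namespace Matrix

variable {ι R : Type*} [Fintype ι] [DecidableEq ι] [CommRing R]

theorem one_sub_permMatrix_mul_diagonal_apply (σ : Perm ι) (q : ι → R) (i j : ι) :
    (1 - σ.permMatrix R * diagonal q) i j =
      (if i = j then 1 else 0) - if σ i = j then q j else 0 := by
  simp [one_apply, Perm.permMatrix, PEquiv.toMatrix_apply]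

theorem det_one_sub_permMatrix_mul_diagonal_of_isCycle {σ : Perm ι} (hσ : σ.IsCycle)
    (hsupp : σ.support = univ) (q : ι → R) :
    det (1 - σ.permMatrix R * diagonal q) = 1 - ∏ i, q i := by
  have hmoved (i : ι) : σ i ≠ i := Perm.mem_support.mp (hsupp ▸ mem_univ i)
  have hmoved_inv (i : ι) : σ⁻¹ i ≠ i := fun h => hmoved i (Perm.inv_eq_iff_eq.mp h).symm
  have hterm_one :
      Perm.sign (1 : Perm ι) • ∏ i, (1 - σ.permMatrix R * diagonal q) ((1 : Perm ι) i) i = 1 := by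
    simp [hmoved]
  have hterm_inv :
      Perm.sign σ⁻¹ • ∏ i, (1 - σ.permMatrix R * diagonal q) (σ⁻¹ i) i = -∏ i, q i := by
    have hsign : Perm.sign σ⁻¹ = -(-1) ^ #(univ : Finset ι) := by
      rw [Perm.sign_inv, hσ.sign, hsupp]
    have hentry (i : ι) : (1 - σ.permMatrix R * diagonal q) (σ⁻¹ i) i = -q i := by
      rw [one_sub_permMatrix_mul_diagonal_apply, if_neg (hmoved_inv i),
        if_pos (Perm.eq_inv_iff_eq.mp rfl), zero_sub]
    have hsq : (-1 : R) ^ #(univ : Finset ι) * (-1) ^ #(univ : Finset ι) = 1 := by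
      rw [← pow_add, Even.neg_one_pow ⟨_, rfl⟩]
    rw [hsign, prod_congr rfl fun i _ => hentry i, prod_neg, Units.smul_def, zsmul_eq_mul]
    push_cast
    linear_combination (-∏ i, q i) * hsq
  rw [det_apply, sum_eq_add 1 σ⁻¹ (inv_ne_one.mpr hσ.ne_one).symm ?_ (by simp) (by simp),
    hterm_one, hterm_inv, sub_eq_add_neg]
  intro τ _ ⟨hτ1, hτσ⟩
  obtain ⟨i, hτi, hτσi⟩ : ∃ i, τ i ≠ i ∧ τ i ≠ σ⁻¹ i := by
    by_contra! h
    have := hσ.inv.eq_one_or_eq_of_forall_apply_eq_or_eq (by rw [Perm.support_inv, hsupp])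
      fun i => or_iff_not_imp_left.mpr (h i)
    tauto
  refine smul_eq_zero_of_right _ (prod_eq_zero (mem_univ i) ?_)
  rw [one_sub_permMatrix_mul_diagonal_apply, if_neg hτi, if_neg (mt Perm.eq_inv_iff_eq.mpr hτσi),
    sub_zero]

theorem det_one_sub_finRotate_permMatrix_mul_diagonal {n : ℕ} (hn : 1 ≤ n) (q : Fin n → R) :
    det (1 - (finRotate n).permMatrix R * diagonal q) = 1 - ∏ i, q i := by
  obtain ⟨m, rfl⟩ := Nat.exists_eq_add_of_le' hn
  rcases m with _ | m
  · simp [det_unique]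
  · exact det_one_sub_permMatrix_mul_diagonal_of_isCycle isCycle_finRotate support_finRotate q

end Matrix

theorem det_one_sub_cyclic_perm_mul_phases_general (n : ℕ) (hn : 1 ≤ n) (β : Fin n → ℝ)
    (hsum : ∑ j, β j = 2 * Real.pi) :
    Matrix.det ((1 : Matrix (Fin n) (Fin n) ℂ) - (finRotate n).permMatrix ℂ *
        Matrix.diagonal (fun j => Complex.exp (Complex.I * (β j) / 2))) = 2 := by
  have hphases : ∏ j, Complex.exp (Complex.I * (β j) / 2) = -1 := by
    rw [← Complex.exp_sum, ← sum_div, ← mul_sum, ← Complex.ofReal_sum, hsum]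
    push_cast
    rw [show Complex.I * (2 * Real.pi) / 2 = Real.pi * Complex.I by ring, Complex.exp_pi_mul_I]
  rw [Matrix.det_one_sub_finRotate_permMatrix_mul_diagonal hn, hphases]
  norm_num

/-- If `β : Fin n → ℝ` takes values in `(0, 2π)` and sums to `2π`, and `σ` is
the cyclic permutation `j ↦ j + 1` of `Fin n`, then
`det(1 - P_σ · diag(exp(i·β_j/2))) = 2`. -/
theorem det_one_sub_cyclic_perm_mul_phases (n : ℕ) (hn : 1 ≤ n) (β : Fin n → ℝ)
    (hβ : ∀ j, β j ∈ Set.Ioo 0 (2 * Real.pi)) (hsum : ∑ j, β j = 2 * Real.pi) :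
    Matrix.det ((1 : Matrix (Fin n) (Fin n) ℂ) - (finRotate n).permMatrix ℂ *
        Matrix.diagonal (fun j => Complex.exp (Complex.I * (β j) / 2))) = 2 :=
  det_one_sub_cyclic_perm_mul_phases_general n hn β hsum
end

section
/- Let X be a finite type, J : X → X an involution with no fixed points, x : X → ℝ with x(J e) = x(e) for all e, and φ : X → ℂ with φ(e) ≠ 0 and φ(J e) = φ(e)⁻¹ for all e. Let M be the X-by-X complex matrix with M_{e,e'} = i·φ(e)·x(e) if e' = J(e) and M_{e,e'} = 0 otherwise. Then det(1 + M) = ∏_{O} (1 + x(e_O)²), where the product ranges over all orbits O = {e_O, J(e_O)} of J on X. -/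
/-!
Ordering `X` orbit by orbit, each orbit `{r, J r}` listed as `r, J r` with `r` its chosen
representative, makes `1 + M` block diagonal with the `2 × 2` blocks
`!![1, i φ(r) x(r); i φ(r)⁻¹ x(r), 1]`, whose determinants are `1 + x(r)²`.
-/

open Finset

section PairOrbits

variable {X : Type*} [Fintype X] [DecidableEq X]

def pairOrbits (J : X → X) : Finset (Finset X) := univ.image fun e => {e, J e}

def orbitPoints (J : X → X) (rep : Finset X → X) (O : Finset X) : Fin 2 → X :=
  ![rep O, J (rep O)]

variable {J : X → X} {rep : Finset X → X}

theorem pair_mem_pairOrbits (e : X) : ({e, J e} : Finset X) ∈ pairOrbits J :=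
  mem_image_of_mem _ (mem_univ e)

theorem pair_eq_of_mem_pairOrbits (hJ : Function.Involutive J) {O : Finset X}
    (hO : O ∈ pairOrbits J) {u : X} (hu : u ∈ O) : ({u, J u} : Finset X) = O := by
  obtain ⟨e, -, rfl⟩ := mem_image.mp hO
  rcases mem_insert.mp hu with rfl | hu
  · rfl
  · rw [mem_singleton.mp hu, hJ e, pair_comm]

theorem pair_orbitPoints_eq (hJ : Function.Involutive J)
    (hrep : ∀ O ∈ pairOrbits J, rep O ∈ O) (O : pairOrbits J) (i : Fin 2) :
    ({orbitPoints J rep O i, J (orbitPoints J rep O i)} : Finset X) = O := by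
  have hO := pair_eq_of_mem_pairOrbits hJ O.2 (hrep O O.2)
  fin_cases i
  · exact hO
  · simpa [orbitPoints, hJ (rep O), pair_comm] using hO

theorem bijective_orbitPoints (hJ : Function.Involutive J) (hfp : ∀ e, J e ≠ e)
    (hrep : ∀ O ∈ pairOrbits J, rep O ∈ O) :
    Function.Bijective fun p : Fin 2 × pairOrbits J => orbitPoints J rep p.2 p.1 := by
  constructor
  · rintro ⟨i, O⟩ ⟨j, O'⟩ h
    obtain rfl : O = O' := Subtype.ext <| by
      rw [← pair_orbitPoints_eq hJ hrep O i, ← pair_orbitPoints_eq hJ hrep O' j]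
      simp only at h
      rw [h]
    have hJr := hfp (rep O)
    fin_cases i <;> fin_cases j <;> simp_all [orbitPoints, eq_comm]
  · intro e
    rcases mem_insert.mp (hrep _ (pair_mem_pairOrbits (J := J) e)) with h | h
    · exact ⟨(0, ⟨_, pair_mem_pairOrbits e⟩), h⟩
    · refine ⟨(1, ⟨_, pair_mem_pairOrbits e⟩), ?_⟩
      simp [orbitPoints, mem_singleton.mp h, hJ e]

theorem det_eq_prod_det_submatrix_orbitPoints {R : Type*} [CommRing R]
    (hJ : Function.Involutive J) (hfp : ∀ e, J e ≠ e) (hrep : ∀ O ∈ pairOrbits J, rep O ∈ O)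
    (N : Matrix X X R) (hN : ∀ e e', e' ≠ e → e' ≠ J e → N e e' = 0) :
    N.det = ∏ O ∈ pairOrbits J, (N.submatrix (orbitPoints J rep O) (orbitPoints J rep O)).det := by
  let σ := Equiv.ofBijective _ (bijective_orbitPoints hJ hfp hrep)
  have hblock : N.submatrix σ σ = Matrix.blockDiagonal fun O : pairOrbits J =>
      N.submatrix (orbitPoints J rep O) (orbitPoints J rep O) := by
    ext ⟨i, O⟩ ⟨j, O'⟩
    rw [Matrix.blockDiagonal_apply]
    split_ifs with hOO
    · subst hOO; rfl
    · simp only [Matrix.submatrix_apply, σ, Equiv.ofBijective_apply]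
      have hO := pair_orbitPoints_eq hJ hrep O i
      have hO' := pair_orbitPoints_eq hJ hrep O' j
      apply hN
      · intro h
        exact hOO (Subtype.ext (by rw [← hO, ← hO', h]))
      · intro h
        refine hOO (Subtype.ext ?_)
        rw [← hO, ← hO', h, hJ, pair_comm]
  rw [← Matrix.det_submatrix_equiv_self σ, hblock, Matrix.det_blockDiagonal]
  exact prod_coe_sort (pairOrbits J) fun O =>
    (N.submatrix (orbitPoints J rep O) (orbitPoints J rep O)).det

end PairOrbits

/-- Let `J` be a fixed-point-free involution of a finite type `X`, `x` a real
weight invariant under `J`, and `φ` a non-vanishing complex function with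
`φ(J e) = φ(e)⁻¹`.  If `M` is the matrix with `M_{e, J e} = i·φ(e)·x(e)` and
zero entries otherwise, then `det(1 + M)` is the product over the orbits
`O = {e, J e}` of `J` of `1 + x(e_O)²`, for any choice of representatives. -/
theorem det_one_add_involution_matrix {X : Type*} [Fintype X] [DecidableEq X]
    (J : X → X) (hJinv : Function.Involutive J) (hJfp : ∀ e, J e ≠ e)
    (x : X → ℝ) (hx : ∀ e, x (J e) = x e)
    (φ : X → ℂ) (hφ0 : ∀ e, φ e ≠ 0) (hφ : ∀ e, φ (J e) = (φ e)⁻¹)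
    (M : Matrix X X ℂ)
    (hM : ∀ e e', M e e' = if e' = J e then Complex.I * φ e * x e else 0)
    (rep : Finset X → X)
    (hrep : ∀ O ∈ Finset.univ.image (fun e => ({e, J e} : Finset X)), rep O ∈ O) :
    Matrix.det (1 + M) =
      ∏ O ∈ Finset.univ.image (fun e => ({e, J e} : Finset X)),
        (1 + ((x (rep O) : ℂ)) ^ 2) := by
  have hN : ∀ e e', e' ≠ e → e' ≠ J e → (1 + M) e e' = 0 := fun e e' h₁ h₂ => by
    simp [hM, Ne.symm h₁, h₂]
  rw [det_eq_prod_det_submatrix_orbitPoints hJinv hJfp hrep _ hN]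
  refine prod_congr rfl fun O _ => ?_
  set r := rep O
  have hJr := hJfp r
  have hblock : (1 + M).submatrix (orbitPoints J rep O) (orbitPoints J rep O) =
      !![1, Complex.I * φ r * x r; Complex.I * (φ r)⁻¹ * x r, 1] := by
    ext i j
    fin_cases i <;> fin_cases j <;> simp [orbitPoints, r, hM, hJr, hJr.symm, hJinv r, hx, hφ]
  rw [hblock, Matrix.det_fin_two_of]
  field_simp [hφ0 r]
  rw [Complex.I_sq]
  ring
end

section
/- Let Γ be a finite connected simple graph with vertex set V, and let ω assign to each ordered pair (u,v) of adjacent vertices a complex number of modulus 1 such that ω(v,u) = ω(u,v)⁻¹. Suppose that for every closed walk v₀, v₁, …, v_k = v₀ in Γ the product ∏_{i=0}^{k−1} ω(v_i, v_{i+1}) lies in {−1, 1}. Then there exists λ : V → ℂ with |λ(v)| = 1 for all v, such that λ(u) · ω(u,v) · λ(v)⁻¹ ∈ {−1, 1} for every pair (u,v) of adjacent vertices. -/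
/-!
Fix a root `v₀` and a walk `p v` from `v₀` to every vertex, and gauge by the holonomy along `p v`.
For adjacent `u, v` the gauged weight `hol(p u) · ω(u,v) · hol(p v)⁻¹` is the holonomy of the
closed walk `p u`, `uv`, `(p v)⁻¹`, hence lies in `{-1, 1}`.
-/

namespace SimpleGraph.Walk

variable {V K : Type*} {G : SimpleGraph V} {ω : V → V → K}

def holonomy [Monoid K] (ω : V → V → K) {u v : V} (p : G.Walk u v) : K :=
  (p.darts.map fun d => ω d.fst d.snd).prod

section Monoid

variable [Monoid K]

@[simp]
theorem holonomy_nil {u : V} : (nil : G.Walk u u).holonomy ω = 1 := rfl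

@[simp]
theorem holonomy_cons {u v w : V} (h : G.Adj u v) (p : G.Walk v w) :
    (cons h p).holonomy ω = ω u v * p.holonomy ω := by
  simp [holonomy]

@[simp]
theorem holonomy_append {u v w : V} (p : G.Walk u v) (q : G.Walk v w) :
    (p.append q).holonomy ω = p.holonomy ω * q.holonomy ω := by
  simp [holonomy, darts_append]

end Monoid

theorem holonomy_reverse [DivisionMonoid K] (hsym : ∀ u v, G.Adj u v → ω v u = (ω u v)⁻¹)
    {u v : V} (p : G.Walk u v) : p.reverse.holonomy ω = (p.holonomy ω)⁻¹ := by
  induction p with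
  | nil => simp
  | cons h p ih => simp [ih, hsym _ _ h, mul_inv_rev]

theorem holonomy_append_cons_reverse [DivisionMonoid K]
    (hsym : ∀ u v, G.Adj u v → ω v u = (ω u v)⁻¹) {r u v : V} (p : G.Walk r u) (h : G.Adj u v)
    (q : G.Walk r v) :
    (p.append (cons h q.reverse)).holonomy ω = p.holonomy ω * ω u v * (q.holonomy ω)⁻¹ := by
  rw [holonomy_append, holonomy_cons, holonomy_reverse hsym, mul_assoc]

theorem norm_holonomy [NormedDivisionRing K] (hmod : ∀ u v, G.Adj u v → ‖ω u v‖ = 1)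
    {u v : V} (p : G.Walk u v) : ‖p.holonomy ω‖ = 1 := by
  induction p with
  | nil => simp
  | cons h p ih => rw [holonomy_cons, norm_mul, ih, hmod _ _ h, one_mul]

end SimpleGraph.Walk

open SimpleGraph

theorem gauge_equivalent_to_kasteleyn_general {V : Type*}
    (Γ : SimpleGraph V) (hconn : Γ.Connected) (ω : V → V → ℂ)
    (hmod : ∀ u v, Γ.Adj u v → ‖ω u v‖ = 1)
    (hsym : ∀ u v, Γ.Adj u v → ω v u = (ω u v)⁻¹)
    (hcycle : ∀ (v : V) (w : Γ.Walk v v),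
      (w.darts.map (fun d => ω d.fst d.snd)).prod ∈ ({-1, 1} : Set ℂ)) :
    ∃ lam : V → ℂ, (∀ v, ‖lam v‖ = 1) ∧
      ∀ u v, Γ.Adj u v → lam u * ω u v * (lam v)⁻¹ ∈ ({-1, 1} : Set ℂ) := by
  obtain ⟨v₀⟩ := hconn.nonempty
  have p : ∀ v, Γ.Walk v₀ v := fun v => (hconn.preconnected v₀ v).some
  refine ⟨fun v => (p v).holonomy ω, fun v => Walk.norm_holonomy hmod (p v), ?_⟩
  intro u v huv
  rw [← Walk.holonomy_append_cons_reverse hsym (p u) huv (p v)]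
  exact hcycle v₀ _

/-- A unimodular edge weight `ω` on a finite connected graph whose holonomy
along every closed walk lies in `{-1, 1}` is gauge-equivalent to a weight with
values in `{-1, 1}`: there is a unimodular `lam : V → ℂ` such that
`lam(u)·ω(u,v)·lam(v)⁻¹ ∈ {-1, 1}` for every pair of adjacent vertices. -/
theorem gauge_equivalent_to_kasteleyn {V : Type*} [Fintype V]
    (Γ : SimpleGraph V) (hconn : Γ.Connected) (ω : V → V → ℂ)
    (hmod : ∀ u v, Γ.Adj u v → ‖ω u v‖ = 1)
    (hsym : ∀ u v, Γ.Adj u v → ω v u = (ω u v)⁻¹)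
    (hcycle : ∀ (v : V) (w : Γ.Walk v v),
      (w.darts.map (fun d => ω d.fst d.snd)).prod ∈ ({-1, 1} : Set ℂ)) :
    ∃ lam : V → ℂ, (∀ v, ‖lam v‖ = 1) ∧
      ∀ u v, Γ.Adj u v → lam u * ω u v * (lam v)⁻¹ ∈ ({-1, 1} : Set ℂ) :=
  gauge_equivalent_to_kasteleyn_general Γ hconn ω hmod hsym hcycle
end

section
/- Let f : ℝ² → ℝ be 2π-periodic in each variable, continuous at every point (θ,η) with (θ,η) ∉ 2πℤ², and suppose there is a constant C such that |f(θ,η)| ≤ C·(1 + |log d((θ,η), 2πℤ²)|) for all (θ,η) ∉ 2πℤ², where d denotes Euclidean distance. Then f is Lebesgue integrable on [0,2π]² and lim_{n→∞} (1/n²) · Σ_{j=0}^{n−1} Σ_{k=0}^{n−1} f( (2j+1)π/n, (2k+1)π/n ) = (1/(4π²)) · ∫_{[0,2π]²} f(θ,η) dθ dη. -/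
/-!
Cut `[0, 2π)²` into the `n²` cells `[2πj/n, 2π(j+1)/n) × [2πk/n, 2π(k+1)/n)` and let `F_n` be the
step function equal on each cell to the value of `f` at its centre; then `∫ F_n` is `(2π/n)²` times
the Riemann sum, and `F_n → f` pointwise on the open square by continuity. Dominated convergence
applies because the distance to `2πℤ²` is at least the distance `min θ (2π - θ)` of the first
coordinate to `{0, 2π}`, and the centre `c` of the cell of `p` satisfies
`min c₁ (2π - c₁) ≥ min p₁ (2π - p₁) / 2`; so the logarithmic bound gives
`|F_n p| ≤ |C| (1 + |log (min p₁ (2π - p₁) / 2)| + |log 4π|)`, which is integrable since `log` is.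
-/

open MeasureTheory

def twoPiLattice : Set (ℝ × ℝ) :=
  {p | ∃ m n : ℤ, p = (2 * Real.pi * m, 2 * Real.pi * n)}

noncomputable def distTwoPiLattice (p : ℝ × ℝ) : ℝ :=
  ⨅ q : ℤ × ℤ, Real.sqrt ((p.1 - 2 * Real.pi * q.1) ^ 2 + (p.2 - 2 * Real.pi * q.2) ^ 2)

open Real Set Filter Topology

lemma min_le_abs_sub_mul_int {a x : ℝ} (hx₀ : 0 ≤ x) (hxa : x ≤ a) (m : ℤ) :
    min x (a - x) ≤ |x - a * m| := by
  rcases le_or_gt m 0 with hm | hm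
  · have : a * m ≤ 0 := mul_nonpos_of_nonneg_of_nonpos (hx₀.trans hxa) (by exact_mod_cast hm)
    exact (min_le_left _ _).trans (by rw [abs_of_nonneg (by linarith)]; linarith)
  · have : a ≤ a * m :=
      le_mul_of_one_le_right (hx₀.trans hxa) (by exact_mod_cast (show (1 : ℤ) ≤ m by omega))
    exact (min_le_right _ _).trans (by rw [abs_of_nonpos (by linarith)]; linarith)

lemma half_min_le_min_of_abs_sub_le {a x y : ℝ} (h : |x - y| ≤ min y (a - y)) :
    min x (a - x) / 2 ≤ min y (a - y) := by
  obtain ⟨h₁, h₂⟩ := abs_le.1 h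
  refine le_min ?_ ?_ <;>
    linarith [min_le_left x (a - x), min_le_right x (a - x),
      min_le_left y (a - y), min_le_right y (a - y)]

lemma abs_log_le_of_mem_Icc {a b x : ℝ} (ha : 0 < a) (hx : x ∈ Icc a b) :
    |log x| ≤ |log a| + |log b| :=
  (abs_le_max_abs_abs (log_le_log ha hx.1) (log_le_log (ha.trans_le hx.1) hx.2)).trans
    (max_le_add_of_nonneg (abs_nonneg _) (abs_nonneg _))

lemma min_le_distTwoPiLattice {p : ℝ × ℝ} (hp : p.1 ∈ Icc 0 (2 * π)) :
    min p.1 (2 * π - p.1) ≤ distTwoPiLattice p :=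
  le_ciInf fun q => (min_le_abs_sub_mul_int hp.1 hp.2 q.1).trans
    (abs_le_sqrt (le_add_of_nonneg_right (sq_nonneg _)))

lemma distTwoPiLattice_le {p : ℝ × ℝ} (hp : p ∈ Icc 0 (2 * π) ×ˢ Icc 0 (2 * π)) :
    distTwoPiLattice p ≤ 4 * π := by
  obtain ⟨⟨h₁, h₁'⟩, h₂, h₂'⟩ := hp
  calc distTwoPiLattice p
      ≤ √((p.1 - 2 * π * (0 : ℤ)) ^ 2 + (p.2 - 2 * π * (0 : ℤ)) ^ 2) :=
        ciInf_le ⟨0, by rintro _ ⟨q, rfl⟩; positivity⟩ ((0 : ℤ), (0 : ℤ))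
    _ ≤ √((4 * π) ^ 2) := by gcongr; push_cast; nlinarith
    _ = 4 * π := sqrt_sq (by positivity)

lemma notMem_twoPiLattice {p : ℝ × ℝ} (hp : p.1 ∈ Ioo 0 (2 * π)) : p ∉ twoPiLattice := by
  rintro ⟨m, k, rfl⟩
  have h := min_le_abs_sub_mul_int hp.1.le hp.2.le m
  simp only [sub_self, abs_zero] at h
  exact (lt_min hp.1 (sub_pos.2 hp.2)).not_ge h

lemma abs_le_of_le_min {f : ℝ × ℝ → ℝ} {C : ℝ}
    (hbound : ∀ p : ℝ × ℝ, p ∉ twoPiLattice →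
      |f p| ≤ C * (1 + |log (distTwoPiLattice p)|))
    {x : ℝ × ℝ} (hx : x ∈ Icc 0 (2 * π) ×ˢ Icc 0 (2 * π)) {a : ℝ} (ha : 0 < a)
    (hax : a ≤ min x.1 (2 * π - x.1)) :
    |f x| ≤ |C| * (1 + |log a| + |log (4 * π)|) := by
  have hx₁ : x.1 ∈ Ioo 0 (2 * π) := by
    have := lt_min_iff.1 (ha.trans_le hax)
    exact ⟨this.1, by linarith [this.2]⟩
  have hd : distTwoPiLattice x ∈ Icc a (4 * π) :=
    ⟨hax.trans (min_le_distTwoPiLattice hx.1), distTwoPiLattice_le hx⟩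
  calc |f x| ≤ C * (1 + |log (distTwoPiLattice x)|) := hbound x (notMem_twoPiLattice hx₁)
    _ ≤ |C| * (1 + |log (distTwoPiLattice x)|) :=
        mul_le_mul_of_nonneg_right (le_abs_self C) (by positivity)
    _ ≤ |C| * (1 + |log a| + |log (4 * π)|) := by
        rw [add_assoc]; gcongr; exact abs_log_le_of_mem_Icc ha hd

noncomputable def logMajorant (C t : ℝ) : ℝ :=
  |C| * (1 + |log (min t (2 * π - t) / 2)| + |log (4 * π)|)

lemma integrableOn_log_min_div_two :
    IntegrableOn (fun t => log (min t (2 * π - t) / 2)) (Ioo 0 (2 * π)) := by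
  have h2π : (0 : ℝ) ≤ 2 * π := by positivity
  have hlog : IntegrableOn log (Ioo 0 (2 * π)) :=
    ((intervalIntegrable_iff_integrableOn_Ioc_of_le h2π).1
      intervalIntegral.intervalIntegrable_log').mono_set Ioo_subset_Ioc_self
  have hlog' : IntegrableOn (fun t => log (2 * π - t)) (Ioo 0 (2 * π)) := by
    have := (intervalIntegral.intervalIntegrable_log' (a := 2 * π) (b := 0)).comp_sub_left (2 * π)
    rw [sub_self, sub_zero] at this
    exact ((intervalIntegrable_iff_integrableOn_Ioc_of_le h2π).1 this).mono_set
      Ioo_subset_Ioc_self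
  refine ((hlog.abs.add hlog'.abs).add (integrable_const |log 2|)).mono'
    ((measurable_id.min (measurable_const.sub measurable_id)).div_const 2).log.aestronglyMeasurable
    (ae_restrict_of_forall_mem measurableSet_Ioo fun t ht => ?_)
  have hmin : 0 < min t (2 * π - t) := lt_min ht.1 (sub_pos.2 ht.2)
  rw [norm_eq_abs, log_div hmin.ne' two_ne_zero]
  refine (abs_sub _ _).trans ?_
  rcases min_choice t (2 * π - t) with h | h <;> rw [h] <;> simp only [Pi.add_apply] <;>
    linarith [abs_nonneg (log t), abs_nonneg (log (2 * π - t))]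

lemma integrable_logMajorant_fst (C : ℝ) :
    Integrable (fun p : ℝ × ℝ => logMajorant C p.1)
      (volume.restrict (Ioo 0 (2 * π) ×ˢ Ioo 0 (2 * π))) := by
  have h : IntegrableOn (logMajorant C) (Ioo 0 (2 * π)) :=
    (((integrable_const 1).add integrableOn_log_min_div_two.abs).add
      (integrable_const _)).const_mul |C|
  rw [Measure.volume_eq_prod, ← Measure.prod_restrict]
  exact h.comp_fst _

noncomputable def gridIndex (n : ℕ) (x : ℝ) : ℕ := ⌊x * n / (2 * π)⌋₊

def gridCell (n j : ℕ) : Set ℝ := Ico (2 * π * j / n) (2 * π * (j + 1) / n)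

noncomputable def gridMid (n j : ℕ) : ℝ := (2 * j + 1) * π / n

lemma mem_gridCell_iff {n j : ℕ} (hn : 0 < n) {x : ℝ} (hx : 0 ≤ x) :
    x ∈ gridCell n j ↔ gridIndex n x = j := by
  have hn' : (0 : ℝ) < n := by exact_mod_cast hn
  have h2π : (0 : ℝ) < 2 * π := by positivity
  rw [gridIndex, Nat.floor_eq_iff (by positivity), gridCell, mem_Ico, div_le_iff₀ hn',
    lt_div_iff₀ hn', le_div_iff₀ h2π, div_lt_iff₀ h2π]
  constructor <;> rintro ⟨h₁, h₂⟩ <;> constructor <;> linarith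

lemma gridIndex_lt {n : ℕ} (hn : 0 < n) {x : ℝ} (hx : x < 2 * π) : gridIndex n x < n := by
  have hn' : (0 : ℝ) < n := by exact_mod_cast hn
  rw [gridIndex, Nat.floor_lt' hn.ne', div_lt_iff₀ (by positivity)]
  nlinarith

lemma abs_sub_gridMid_le {n j : ℕ} {x : ℝ} (hx : x ∈ gridCell n j) :
    |x - gridMid n j| ≤ π / n := by
  obtain ⟨h₁, h₂⟩ := hx
  have e₁ : 2 * π * j / n = (2 * j + 1) * π / n - π / n := by ring
  have e₂ : 2 * π * (j + 1) / n = (2 * j + 1) * π / n + π / n := by ring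
  rw [gridMid, abs_le]
  constructor <;> linarith

lemma pi_div_le_min_gridMid {n j : ℕ} (hj : j < n) :
    π / n ≤ min (gridMid n j) (2 * π - gridMid n j) := by
  have hn : (0 : ℝ) < n := by exact_mod_cast j.zero_le.trans_lt hj
  have hj' : (j : ℝ) + 1 ≤ n := by exact_mod_cast hj
  rw [gridMid]
  refine le_min ?_ ?_
  · gcongr; nlinarith [pi_pos, j.cast_nonneg (α := ℝ)]
  · rw [le_sub_iff_add_le, ← add_div, div_le_iff₀ hn]
    nlinarith [pi_pos]

lemma gridMid_mem_Icc {n j : ℕ} (hj : j < n) : gridMid n j ∈ Icc 0 (2 * π) := by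
  have h := pi_div_le_min_gridMid hj
  have : 0 ≤ π / n := by positivity
  exact ⟨by linarith [min_le_left (gridMid n j) (2 * π - gridMid n j)],
    by linarith [min_le_right (gridMid n j) (2 * π - gridMid n j)]⟩

lemma gridCell_subset_Icc {n j : ℕ} (hj : j < n) : gridCell n j ⊆ Icc 0 (2 * π) := by
  have hn : (0 : ℝ) < n := by exact_mod_cast j.zero_le.trans_lt hj
  have hj' : (j : ℝ) + 1 ≤ n := by exact_mod_cast hj
  rintro x ⟨h₁, h₂⟩
  refine ⟨(by positivity : (0 : ℝ) ≤ 2 * π * j / n).trans h₁, h₂.le.trans ?_⟩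
  rw [div_le_iff₀ hn]
  nlinarith [pi_pos]

lemma volume_real_gridCell (n j : ℕ) : volume.real (gridCell n j) = 2 * π / n := by
  rw [gridCell, Real.volume_real_Ico, max_eq_left (by ring_nf; positivity)]
  ring

lemma tendsto_gridMid_gridIndex {x : ℝ} (hx : x ∈ Ico 0 (2 * π)) :
    Tendsto (fun n => gridMid n (gridIndex n x)) atTop (𝓝 x) := by
  rw [tendsto_iff_dist_tendsto_zero]
  refine squeeze_zero' (Eventually.of_forall fun n => dist_nonneg) ?_
    (tendsto_const_div_atTop_nhds_zero_nat π)
  filter_upwards [eventually_gt_atTop 0] with n hn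
  rw [dist_comm, Real.dist_eq]
  exact abs_sub_gridMid_le ((mem_gridCell_iff hn hx.1).2 rfl)

noncomputable def riemannStep (f : ℝ × ℝ → ℝ) (n : ℕ) (p : ℝ × ℝ) : ℝ :=
  ∑ j ∈ Finset.range n, ∑ k ∈ Finset.range n,
    (gridCell n j ×ˢ gridCell n k).indicator (fun _ => f (gridMid n j, gridMid n k)) p

lemma measurable_riemannStep (f : ℝ × ℝ → ℝ) (n : ℕ) : Measurable (riemannStep f n) :=
  Finset.measurable_sum _ fun _ _ => Finset.measurable_sum _ fun _ _ =>
    measurable_const.indicator (measurableSet_Ico.prod measurableSet_Ico)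

lemma integral_riemannStep (f : ℝ × ℝ → ℝ) (n : ℕ) :
    ∫ p in Icc 0 (2 * π) ×ˢ Icc 0 (2 * π), riemannStep f n p
      = (2 * π / n) ^ 2 * ∑ j ∈ Finset.range n, ∑ k ∈ Finset.range n,
          f (gridMid n j, gridMid n k) := by
  have hcell (j k : ℕ) : MeasurableSet (gridCell n j ×ˢ gridCell n k) :=
    measurableSet_Ico.prod measurableSet_Ico
  have hint (j k : ℕ) : IntegrableOn ((gridCell n j ×ˢ gridCell n k).indicator
      (fun _ => f (gridMid n j, gridMid n k))) (Icc 0 (2 * π) ×ˢ Icc 0 (2 * π)) :=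
    (integrableOn_const ((isCompact_Icc.prod isCompact_Icc).measure_lt_top.ne)).indicator
      (hcell j k)
  simp only [riemannStep]
  rw [integral_finsetSum _ fun j _ => integrable_finsetSum _ fun k _ => hint j k, Finset.mul_sum]
  refine Finset.sum_congr rfl fun j hj => ?_
  rw [integral_finsetSum _ fun k _ => hint j k, Finset.mul_sum]
  refine Finset.sum_congr rfl fun k hk => ?_
  rw [setIntegral_indicator (hcell j k), inter_eq_self_of_subset_right (prod_mono
    (gridCell_subset_Icc (Finset.mem_range.1 hj)) (gridCell_subset_Icc (Finset.mem_range.1 hk))),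
    setIntegral_const, Measure.volume_eq_prod, measureReal_prod_prod, volume_real_gridCell,
    volume_real_gridCell, smul_eq_mul]
  ring

section RiemannStep

variable {f : ℝ × ℝ → ℝ}

lemma riemannStep_eq {n : ℕ} (hn : 0 < n) {p : ℝ × ℝ} (h₁ : p.1 ∈ Ico 0 (2 * π))
    (h₂ : p.2 ∈ Ico 0 (2 * π)) :
    riemannStep f n p = f (gridMid n (gridIndex n p.1), gridMid n (gridIndex n p.2)) := by
  have hmem (j k : ℕ) :
      p ∈ gridCell n j ×ˢ gridCell n k ↔ gridIndex n p.1 = j ∧ gridIndex n p.2 = k :=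
    and_congr (mem_gridCell_iff hn h₁.1) (mem_gridCell_iff hn h₂.1)
  rw [riemannStep, Finset.sum_eq_single_of_mem _ (Finset.mem_range.2 (gridIndex_lt hn h₁.2)),
    Finset.sum_eq_single_of_mem _ (Finset.mem_range.2 (gridIndex_lt hn h₂.2)),
    indicator_of_mem ((hmem _ _).2 ⟨rfl, rfl⟩)]
  · exact fun k _ hk => indicator_of_notMem (fun h => hk ((hmem _ _).1 h).2.symm) _
  · exact fun j _ hj => Finset.sum_eq_zero fun k _ =>
      indicator_of_notMem (fun h => hj ((hmem _ _).1 h).1.symm) _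

lemma tendsto_riemannStep {p : ℝ × ℝ} (hp : p ∈ Ioo 0 (2 * π) ×ˢ Ioo 0 (2 * π))
    (hf : ContinuousAt f p) : Tendsto (fun n => riemannStep f n p) atTop (𝓝 (f p)) := by
  have h₁ : p.1 ∈ Ico 0 (2 * π) := Ioo_subset_Ico_self hp.1
  have h₂ : p.2 ∈ Ico 0 (2 * π) := Ioo_subset_Ico_self hp.2
  refine (hf.tendsto.comp ((tendsto_gridMid_gridIndex h₁).prodMk_nhds
    (tendsto_gridMid_gridIndex h₂))).congr' ?_
  filter_upwards [eventually_gt_atTop 0] with n hn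
  exact (riemannStep_eq hn h₁ h₂).symm

variable {C : ℝ}

lemma abs_le_logMajorant
    (hbound : ∀ p : ℝ × ℝ, p ∉ twoPiLattice →
      |f p| ≤ C * (1 + |log (distTwoPiLattice p)|))
    {p : ℝ × ℝ} (hp : p ∈ Ioo 0 (2 * π) ×ˢ Ioo 0 (2 * π)) : |f p| ≤ logMajorant C p.1 :=
  have hmin : 0 < min p.1 (2 * π - p.1) := lt_min hp.1.1 (sub_pos.2 hp.1.2)
  abs_le_of_le_min hbound (prod_mono Ioo_subset_Icc_self Ioo_subset_Icc_self hp) (half_pos hmin)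
    (half_le_self hmin.le)

lemma abs_riemannStep_le_logMajorant
    (hbound : ∀ p : ℝ × ℝ, p ∉ twoPiLattice →
      |f p| ≤ C * (1 + |log (distTwoPiLattice p)|))
    (n : ℕ) {p : ℝ × ℝ} (hp : p ∈ Ioo 0 (2 * π) ×ˢ Ioo 0 (2 * π)) :
    |riemannStep f n p| ≤ logMajorant C p.1 := by
  rcases n.eq_zero_or_pos with rfl | hn
  · simp only [riemannStep, Finset.range_zero, Finset.sum_empty, abs_zero, logMajorant]
    positivity
  have h₁ : p.1 ∈ Ico 0 (2 * π) := Ioo_subset_Ico_self hp.1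
  have h₂ : p.2 ∈ Ico 0 (2 * π) := Ioo_subset_Ico_self hp.2
  have hmin : 0 < min p.1 (2 * π - p.1) := lt_min hp.1.1 (sub_pos.2 hp.1.2)
  have hmid := pi_div_le_min_gridMid (gridIndex_lt hn h₁.2)
  rw [riemannStep_eq hn h₁ h₂]
  exact abs_le_of_le_min hbound
    ⟨gridMid_mem_Icc (gridIndex_lt hn h₁.2), gridMid_mem_Icc (gridIndex_lt hn h₂.2)⟩
    (half_pos hmin) (half_min_le_min_of_abs_sub_le
      ((abs_sub_gridMid_le ((mem_gridCell_iff hn h₁.1).2 rfl)).trans hmid))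

end RiemannStep

theorem riemann_sum_roots_of_neg_one_converges_general (f : ℝ × ℝ → ℝ)
    (hcont : ∀ p : ℝ × ℝ, p ∉ twoPiLattice → ContinuousAt f p)
    (C : ℝ)
    (hbound : ∀ p : ℝ × ℝ, p ∉ twoPiLattice →
      |f p| ≤ C * (1 + |Real.log (distTwoPiLattice p)|)) :
    IntegrableOn f (Set.Icc (0 : ℝ) (2 * Real.pi) ×ˢ Set.Icc (0 : ℝ) (2 * Real.pi)) ∧
    Filter.Tendsto
      (fun n : ℕ => (1 / (n : ℝ) ^ 2) *
        ∑ j ∈ Finset.range n, ∑ k ∈ Finset.range n,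
          f ((2 * (j : ℝ) + 1) * Real.pi / n, (2 * (k : ℝ) + 1) * Real.pi / n))
      Filter.atTop
      (nhds ((1 / (4 * Real.pi ^ 2)) *
        ∫ p in Set.Icc (0 : ℝ) (2 * Real.pi) ×ˢ Set.Icc (0 : ℝ) (2 * Real.pi), f p)) := by
  have hS : (Icc 0 (2 * π) ×ˢ Icc 0 (2 * π) : Set (ℝ × ℝ)) =ᵐ[volume]
      Ioo 0 (2 * π) ×ˢ Ioo 0 (2 * π) := by
    rw [Measure.volume_eq_prod]
    exact Measure.set_prod_ae_eq Ioo_ae_eq_Icc.symm Ioo_ae_eq_Icc.symm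
  have hSm : MeasurableSet (Ioo 0 (2 * π) ×ˢ Ioo 0 (2 * π) : Set (ℝ × ℝ)) :=
    measurableSet_Ioo.prod measurableSet_Ioo
  have hG := integrable_logMajorant_fst C
  have hf_meas : AEStronglyMeasurable f (volume.restrict (Ioo 0 (2 * π) ×ˢ Ioo 0 (2 * π))) :=
    ContinuousOn.aestronglyMeasurable
      (fun p hp => (hcont p (notMem_twoPiLattice hp.1)).continuousWithinAt) hSm
  refine ⟨IntegrableOn.congr_set_ae (hG.mono' hf_meas (ae_restrict_of_forall_mem hSm
    fun p hp => abs_le_logMajorant hbound hp)) hS, ?_⟩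
  have hlim := tendsto_integral_of_dominated_convergence _
    (fun n => (measurable_riemannStep f n).aestronglyMeasurable) hG
    (fun n => ae_restrict_of_forall_mem hSm fun p hp => abs_riemannStep_le_logMajorant hbound n hp)
    (ae_restrict_of_forall_mem hSm fun p hp =>
      tendsto_riemannStep hp (hcont p (notMem_twoPiLattice hp.1)))
  rw [setIntegral_congr_set hS]
  refine (hlim.const_mul (1 / (4 * π ^ 2))).congr fun n => ?_
  rw [← setIntegral_congr_set hS, integral_riemannStep, ← mul_assoc, div_pow, mul_pow]
  congr 1
  field_simp
  ring

/-- A doubly `2π`-periodic function which is continuous away from `2πℤ²` and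
has at most a logarithmic singularity there is integrable on `[0,2π]²`, and its
Riemann sums over the grid `((2j+1)π/n, (2k+1)π/n)` (i.e. over pairs of `n`-th
roots of `-1`) converge to `1/(4π²)` times its integral over `[0,2π]²`. -/
theorem riemann_sum_roots_of_neg_one_converges (f : ℝ × ℝ → ℝ)
    (hper1 : ∀ θ η : ℝ, f (θ + 2 * Real.pi, η) = f (θ, η))
    (hper2 : ∀ θ η : ℝ, f (θ, η + 2 * Real.pi) = f (θ, η))
    (hcont : ∀ p : ℝ × ℝ, p ∉ twoPiLattice → ContinuousAt f p)
    (C : ℝ)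
    (hbound : ∀ p : ℝ × ℝ, p ∉ twoPiLattice →
      |f p| ≤ C * (1 + |Real.log (distTwoPiLattice p)|)) :
    IntegrableOn f (Set.Icc (0 : ℝ) (2 * Real.pi) ×ˢ Set.Icc (0 : ℝ) (2 * Real.pi)) ∧
    Filter.Tendsto
      (fun n : ℕ => (1 / (n : ℝ) ^ 2) *
        ∑ j ∈ Finset.range n, ∑ k ∈ Finset.range n,
          f ((2 * (j : ℝ) + 1) * Real.pi / n, (2 * (k : ℝ) + 1) * Real.pi / n))
      Filter.atTop
      (nhds ((1 / (4 * Real.pi ^ 2)) *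
        ∫ p in Set.Icc (0 : ℝ) (2 * Real.pi) ×ˢ Set.Icc (0 : ℝ) (2 * Real.pi), f p)) :=
  riemann_sum_roots_of_neg_one_converges_general f hcont C hbound
end
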